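/- arXiv:0709.0481 — 4 statements merged into one kernel-verified Lean document; each statement's English description precedes it below -/
import Mathlib

section
/- The set G_n of (n+3)×(n+3) complex matrices of the form given (upper triangular with 1's on the diagonal, whose only nonzero off-diagonal entries are: entries (k, n+1) equal to -conj(x_{n-k}) for k=1,...,n-1, entry (n, n+2) equal to -conj(x_1), entries (k, n+2) equal to x_{n+1-k} for k=1,...,n-1, entries (k, n+3) equal to y_{n+1-k} for k=1,...,n, and entries (n+1, n+3) and (n+2, n+3) both equal to x_1, with x_k, y_k complex parameters) is closed under matrix multiplication. -/
open Matrix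

/-- The matrix of the group `G_n` with parameters `x 1, …, x n, y 1, …, y n`
(1-indexed; values of `x`, `y` outside `{1, …, n}` are irrelevant). -/
noncomputable def Gmat (n : ℕ) (x y : ℕ → ℂ) : Matrix (Fin (n+3)) (Fin (n+3)) ℂ :=
  Matrix.of fun i j : Fin (n+3) =>
    if (i : ℕ) = (j : ℕ) then 1
    else if (j : ℕ) = n ∧ (i : ℕ) + 2 ≤ n then -(starRingEnd ℂ) (x (n - 1 - (i : ℕ)))
    else if (j : ℕ) = n + 1 ∧ (i : ℕ) + 1 = n then -(starRingEnd ℂ) (x 1)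
    else if (j : ℕ) = n + 1 ∧ (i : ℕ) + 2 ≤ n then x (n - (i : ℕ))
    else if (j : ℕ) = n + 2 ∧ (i : ℕ) + 1 ≤ n then y (n - (i : ℕ))
    else if (j : ℕ) = n + 2 ∧ ((i : ℕ) = n ∨ (i : ℕ) = n + 1) then x 1
    else 0

/-- The set of matrices of the group `G_n`. -/
def GnSet (n : ℕ) : Set (Matrix (Fin (n+3)) (Fin (n+3)) ℂ) :=
  {A | ∃ x y : ℕ → ℂ, A = Gmat n x y}

/-- The strictly upper triangular part of `Gmat`. -/
noncomputable def Emat (n : ℕ) (x y : ℕ → ℂ) : Matrix (Fin (n+3)) (Fin (n+3)) ℂ :=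
  Matrix.of fun i j : Fin (n+3) =>
    if (i : ℕ) = (j : ℕ) then 0
    else if (j : ℕ) = n ∧ (i : ℕ) + 2 ≤ n then -(starRingEnd ℂ) (x (n - 1 - (i : ℕ)))
    else if (j : ℕ) = n + 1 ∧ (i : ℕ) + 1 = n then -(starRingEnd ℂ) (x 1)
    else if (j : ℕ) = n + 1 ∧ (i : ℕ) + 2 ≤ n then x (n - (i : ℕ))
    else if (j : ℕ) = n + 2 ∧ (i : ℕ) + 1 ≤ n then y (n - (i : ℕ))
    else if (j : ℕ) = n + 2 ∧ ((i : ℕ) = n ∨ (i : ℕ) = n + 1) then x 1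
    else 0

lemma Gmat_eq_one_add (n : ℕ) (x y : ℕ → ℂ) :
    Gmat n x y = 1 + Emat n x y := by
  ext i j
  by_cases h : (i : ℕ) = (j : ℕ)
  · have : i = j := Fin.ext h
    subst this
    simp [Gmat, Emat, Matrix.one_apply]
  · have hij : i ≠ j := fun e => h (by rw [e])
    simp [Gmat, Emat, Matrix.one_apply, h, hij]

lemma Emat_mul (n : ℕ) (x y x' y' : ℕ → ℂ) (i j : Fin (n+3)) :
    (Emat n x y * Emat n x' y') i j
      = (Emat n x y i ⟨n, by omega⟩ + Emat n x y i ⟨n+1, by omega⟩)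
        * (if (j : ℕ) = n + 2 then x' 1 else 0) := by
  set a : Fin (n+3) := ⟨n, by omega⟩ with ha
  set b : Fin (n+3) := ⟨n+1, by omega⟩ with hb
  have hab : a ≠ b := by
    simp [ha, hb, Fin.ext_iff]
  have hrow : ∀ k : Fin (n+3), (k : ℕ) = n ∨ (k : ℕ) = n + 1 →
      Emat n x' y' k j = (if (j : ℕ) = n + 2 then x' 1 else 0) := by
    rintro k hk
    simp only [Emat, Matrix.of_apply]
    split_ifs <;> first | rfl | omega | (simp_all only [true_and]; try omega)
  have hzero : ∀ k : Fin (n+3), k ∉ ({a, b} : Finset (Fin (n+3))) →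
      Emat n x y i k * Emat n x' y' k j = 0 := by
    intro k hk
    simp only [Finset.mem_insert, Finset.mem_singleton] at hk
    push_neg at hk
    have hka : (k : ℕ) ≠ n := fun h => hk.1 (Fin.ext h)
    have hkb : (k : ℕ) ≠ n + 1 := fun h => hk.2 (Fin.ext h)
    by_cases hk2 : (k : ℕ) = n + 2
    · have : Emat n x' y' k j = 0 := by
        simp only [Emat, Matrix.of_apply]
        split_ifs <;> first | rfl | omega | (simp_all only [true_and]; try omega)
      rw [this, mul_zero]
    · have : Emat n x y i k = 0 := by
        simp only [Emat, Matrix.of_apply]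
        split_ifs <;> first | rfl | omega | (simp_all only [true_and]; try omega)
      rw [this, zero_mul]
  rw [Matrix.mul_apply,
    ← Finset.sum_subset (Finset.subset_univ ({a, b} : Finset (Fin (n+3))))
      (fun k _ hk => hzero k hk),
    Finset.sum_pair hab, hrow a (Or.inl rfl), hrow b (Or.inr rfl)]
  ring

lemma Emat_col_n (n : ℕ) (x y : ℕ → ℂ) (i : Fin (n+3)) :
    Emat n x y i ⟨n, by omega⟩
      = if (i : ℕ) + 2 ≤ n then -(starRingEnd ℂ) (x (n - 1 - (i : ℕ))) else 0 := by
  have hv : ((⟨n, by omega⟩ : Fin (n+3)) : ℕ) = n := rfl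
  simp only [Emat, Matrix.of_apply, hv]
  split_ifs <;> first | rfl | omega | (simp_all only [true_and]; try omega)

lemma Emat_col_n1 (n : ℕ) (x y : ℕ → ℂ) (i : Fin (n+3)) :
    Emat n x y i ⟨n+1, by omega⟩
      = if (i : ℕ) + 1 = n then -(starRingEnd ℂ) (x 1)
        else if (i : ℕ) + 2 ≤ n then x (n - (i : ℕ)) else 0 := by
  have hv : ((⟨n+1, by omega⟩ : Fin (n+3)) : ℕ) = n + 1 := rfl
  simp only [Emat, Matrix.of_apply, hv]
  split_ifs <;> first | rfl | omega | (simp_all only [true_and]; try omega)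

set_option maxHeartbeats 1600000 in
/-- `G_n` is closed under matrix multiplication. -/
theorem Gn_mul_closed (n : ℕ) (hn : 2 ≤ n) :
    ∀ A ∈ GnSet n, ∀ B ∈ GnSet n, A * B ∈ GnSet n := by
  rintro A ⟨x, y, rfl⟩ B ⟨x', y', rfl⟩
  refine ⟨fun k => x k + x' k,
    fun k => y k + y' k +
      (if k = 1 then -(starRingEnd ℂ) (x 1)
        else if 2 ≤ k then x k - (starRingEnd ℂ) (x (k - 1)) else 0) * x' 1, ?_⟩
  rw [Gmat_eq_one_add, Gmat_eq_one_add, Gmat_eq_one_add]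
  have key : Emat n x y + Emat n x' y' + Emat n x y * Emat n x' y'
      = Emat n (fun k => x k + x' k)
          (fun k => y k + y' k +
            (if k = 1 then -(starRingEnd ℂ) (x 1)
              else if 2 ≤ k then x k - (starRingEnd ℂ) (x (k - 1)) else 0) * x' 1) := by
    ext i j
    rw [Matrix.add_apply, Matrix.add_apply, Emat_mul, Emat_col_n, Emat_col_n1]
    simp only [Emat, Matrix.of_apply]
    have hsub : n - 1 - (i : ℕ) = n - (i : ℕ) - 1 := by omega
    split_ifs <;> first | omega | ring1 | (simp only [map_add, map_neg, hsub]; ring1)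
  calc (1 + Emat n x y) * (1 + Emat n x' y')
      = 1 + (Emat n x y + Emat n x' y' + Emat n x y * Emat n x' y') := by
        rw [mul_add, mul_one, add_mul, one_mul]
        abel
    _ = _ := by rw [key]
end

section
/- Every matrix in G_n is invertible and its inverse again lies in G_n; hence G_n is a subgroup of GL(n+3, ℂ). -/
open Matrix

/-- A matrix supported on a single column. -/
def colMat {m : ℕ} (c : Fin m → ℂ) (j0 : Fin m) : Matrix (Fin m) (Fin m) ℂ :=
  Matrix.of fun i j => if j = j0 then c i else 0

lemma colMat_mul_colMat {m : ℕ} (c : Fin m → ℂ) (j0 : Fin m) (d : Fin m → ℂ) (j1 : Fin m) :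
    colMat c j0 * colMat d j1 = colMat (fun i => d j0 * c i) j1 := by
  ext i j
  simp only [colMat, Matrix.mul_apply, Matrix.of_apply]
  rw [Finset.sum_eq_single j0]
  · simp only [if_pos rfl]; split_ifs <;> ring
  · intro b _ hb; simp [hb]
  · intro h; exact absurd (Finset.mem_univ _) h

lemma colMat_add {m : ℕ} (c d : Fin m → ℂ) (j0 : Fin m) :
    colMat (fun i => c i + d i) j0 = colMat c j0 + colMat d j0 := by
  ext i j; simp only [colMat, Matrix.add_apply, Matrix.of_apply]; split_ifs <;> simp

lemma colMat_zero {m : ℕ} (j0 : Fin m) : colMat (fun _ => (0:ℂ)) j0 = 0 := by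
  ext i j; simp [colMat]

/-- The first special column vector of a `Gmat`. -/
noncomputable def avec (n : ℕ) (x : ℕ → ℂ) : Fin (n+3) → ℂ :=
  fun i => if (i : ℕ) + 2 ≤ n then -(starRingEnd ℂ) (x (n - 1 - (i : ℕ))) else 0

/-- The second special column vector of a `Gmat`. -/
noncomputable def bvec (n : ℕ) (x : ℕ → ℂ) : Fin (n+3) → ℂ :=
  fun i => if (i : ℕ) + 1 = n then -(starRingEnd ℂ) (x 1)
    else if (i : ℕ) + 2 ≤ n then x (n - (i : ℕ)) else 0

/-- The third special column vector of a `Gmat`. -/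
noncomputable def cvec (n : ℕ) (x y : ℕ → ℂ) : Fin (n+3) → ℂ :=
  fun i => if (i : ℕ) + 1 ≤ n then y (n - (i : ℕ))
    else if (i : ℕ) = n ∨ (i : ℕ) = n + 1 then x 1 else 0

/-- Normal form of a matrix in `G_n`. -/
noncomputable def NF (n : ℕ) (a b c : Fin (n+3) → ℂ) : Matrix (Fin (n+3)) (Fin (n+3)) ℂ :=
  1 + colMat a ⟨n, by omega⟩ + colMat b ⟨n+1, by omega⟩ + colMat c ⟨n+2, by omega⟩

set_option maxHeartbeats 2000000 in
lemma Gmat_eq_NF (n : ℕ) (x y : ℕ → ℂ) :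
    Gmat n x y = NF n (avec n x) (bvec n x) (cvec n x y) := by
  ext i j
  simp only [Gmat, NF, colMat, avec, bvec, cvec, Matrix.add_apply, Matrix.one_apply,
    Matrix.of_apply, Fin.ext_iff]
  split_ifs <;> first | omega | ring

lemma avec_special (n : ℕ) (x : ℕ → ℂ) (i : Fin (n+3)) (h : n ≤ (i:ℕ)) : avec n x i = 0 := by
  simp only [avec]; rw [if_neg]; omega

lemma bvec_special (n : ℕ) (x : ℕ → ℂ) (i : Fin (n+3)) (h : n ≤ (i:ℕ)) : bvec n x i = 0 := by
  simp only [bvec]; rw [if_neg, if_neg] <;> omega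

lemma cvec_n (n : ℕ) (x y : ℕ → ℂ) : cvec n x y ⟨n, by omega⟩ = x 1 := by
  have h1 : ¬(n + 1 ≤ n) := by omega
  simp [cvec, h1]

lemma cvec_n1 (n : ℕ) (x y : ℕ → ℂ) : cvec n x y ⟨n+1, by omega⟩ = x 1 := by
  have h1 : ¬(n + 1 + 1 ≤ n) := by omega
  simp [cvec, h1]

lemma cvec_n2 (n : ℕ) (x y : ℕ → ℂ) : cvec n x y ⟨n+2, by omega⟩ = 0 := by
  have h1 : ¬(n + 2 + 1 ≤ n) := by omega
  have h2 : ¬(n + 2 = n ∨ n + 2 = n + 1) := by omega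
  simp [cvec, h1, h2]

lemma NF_mul (n : ℕ) (a b c a' b' c' : Fin (n+3) → ℂ)
    (ha0 : a' ⟨n, by omega⟩ = 0) (ha1 : a' ⟨n+1, by omega⟩ = 0) (ha2 : a' ⟨n+2, by omega⟩ = 0)
    (hb0 : b' ⟨n, by omega⟩ = 0) (hb1 : b' ⟨n+1, by omega⟩ = 0) (hb2 : b' ⟨n+2, by omega⟩ = 0)
    (hc2 : c' ⟨n+2, by omega⟩ = 0) :
    NF n a b c * NF n a' b' c' =
      NF n (fun i => a i + a' i) (fun i => b i + b' i)
        (fun i => c i + c' i + (c' ⟨n, by omega⟩ * a i + c' ⟨n+1, by omega⟩ * b i)) := by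
  simp only [NF, add_mul, mul_add, one_mul, mul_one, colMat_mul_colMat, ha0, ha1, ha2,
    hb0, hb1, hb2, hc2, zero_mul, colMat_zero, add_zero, colMat_add]
  abel

lemma avec_add (n : ℕ) (x x' : ℕ → ℂ) :
    (fun i => avec n x i + avec n x' i) = avec n (x + x') := by
  funext i; simp only [avec, Pi.add_apply]; split_ifs <;> simp [map_add] <;> ring

lemma bvec_add (n : ℕ) (x x' : ℕ → ℂ) :
    (fun i => bvec n x i + bvec n x' i) = bvec n (x + x') := by
  funext i; simp only [bvec, Pi.add_apply]; split_ifs <;> simp [map_add] <;> ring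

lemma cvec_comb (n : ℕ) (x y x' y' : ℕ → ℂ) :
    (fun i => cvec n x y i + cvec n x' y' i +
        (cvec n x' y' ⟨n, by omega⟩ * avec n x i + cvec n x' y' ⟨n+1, by omega⟩ * bvec n x i)) =
      cvec n (x + x') (fun k => y k + y' k +
        x' 1 * (if k = 1 then -(starRingEnd ℂ) (x 1) else x k - (starRingEnd ℂ) (x (k-1)))) := by
  funext i
  rw [cvec_n, cvec_n1]
  have e1 : n - 1 - (i:ℕ) = n - (i:ℕ) - 1 := by omega
  simp only [cvec, avec, bvec, Pi.add_apply, e1]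
  split_ifs
  all_goals try (exfalso; omega)
  all_goals ring

/-- The key product formula for matrices of `G_n`. -/
lemma Gmat_mul (n : ℕ) (x y x' y' : ℕ → ℂ) :
    Gmat n x y * Gmat n x' y' = Gmat n (x + x')
      (fun k => y k + y' k +
        x' 1 * (if k = 1 then -(starRingEnd ℂ) (x 1) else x k - (starRingEnd ℂ) (x (k-1)))) := by
  rw [Gmat_eq_NF n x y, Gmat_eq_NF n x' y', Gmat_eq_NF n (x + x'),
    NF_mul n _ _ _ _ _ _ (avec_special n x' _ (Nat.le_refl n))
      (avec_special n x' _ (Nat.le_add_right n 1)) (avec_special n x' _ (Nat.le_add_right n 2))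
      (bvec_special n x' _ (Nat.le_refl n)) (bvec_special n x' _ (Nat.le_add_right n 1))
      (bvec_special n x' _ (Nat.le_add_right n 2)) (cvec_n2 n x' y'),
    avec_add, bvec_add, cvec_comb]

lemma Gmat_one (n : ℕ) : Gmat n 0 0 = 1 := by
  rw [Gmat_eq_NF]
  have ha : avec n 0 = fun _ => 0 := by funext i; simp [avec]
  have hb : bvec n 0 = fun _ => 0 := by funext i; simp [bvec]
  have hc : cvec n 0 0 = fun _ => 0 := by funext i; simp [cvec]
  rw [NF, ha, hb, hc, colMat_zero, colMat_zero, colMat_zero]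
  simp

/-- Explicit two-sided inverse inside `G_n`. -/
lemma Gmat_inv (n : ℕ) (x y : ℕ → ℂ) :
    ∃ x' y' : ℕ → ℂ,
      Gmat n x y * Gmat n x' y' = 1 ∧ Gmat n x' y' * Gmat n x y = 1 := by
  refine ⟨fun k => -x k, fun k => -y k +
    x 1 * (if k = 1 then -(starRingEnd ℂ) (x 1) else x k - (starRingEnd ℂ) (x (k-1))), ?_, ?_⟩
  · rw [Gmat_mul]
    have e1 : x + (fun k => -x k) = 0 := by funext k; simp
    have e2 : (fun k => y k + (-y k +
        x 1 * (if k = 1 then -(starRingEnd ℂ) (x 1) else x k - (starRingEnd ℂ) (x (k-1)))) +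
        (fun k => -x k) 1 *
          (if k = 1 then -(starRingEnd ℂ) (x 1) else x k - (starRingEnd ℂ) (x (k-1))))
        = (0 : ℕ → ℂ) := by
      funext k; by_cases hk : k = 1 <;> simp [hk] <;> ring
    rw [e1, e2, Gmat_one]
  · rw [Gmat_mul]
    have e1 : (fun k => -x k) + x = 0 := by funext k; simp
    have e2 : (fun k => (-y k +
        x 1 * (if k = 1 then -(starRingEnd ℂ) (x 1) else x k - (starRingEnd ℂ) (x (k-1)))) + y k +
        x 1 * (if k = 1 then -(starRingEnd ℂ) ((fun k => -x k) 1)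
          else (fun k => -x k) k - (starRingEnd ℂ) ((fun k => -x k) (k-1))))
        = (0 : ℕ → ℂ) := by
      funext k; by_cases hk : k = 1 <;> simp [hk] <;> ring
    rw [e1, e2, Gmat_one]

/-- every matrix in `G_n` is invertible with inverse again in `G_n`;
hence `G_n` is a subgroup of `GL(n+3, ℂ)`. -/
theorem Gn_inv_closed (n : ℕ) (hn : 2 ≤ n) :
    (∀ x y : ℕ → ℂ, ∃ x' y' : ℕ → ℂ,
      Gmat n x y * Gmat n x' y' = 1 ∧ Gmat n x' y' * Gmat n x y = 1) ∧
    ∃ H : Subgroup (GL (Fin (n+3)) ℂ),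
      (H : Set (GL (Fin (n+3)) ℂ)) = {g : GL (Fin (n+3)) ℂ | ↑g ∈ GnSet n} := by
  constructor
  · intro x y
    exact Gmat_inv n x y
  · refine ⟨{ carrier := {g : GL (Fin (n+3)) ℂ | ↑g ∈ GnSet n}
              mul_mem' := ?_
              one_mem' := ?_
              inv_mem' := ?_ }, rfl⟩
    · rintro a b ⟨xa, ya, ha⟩ ⟨xb, yb, hb⟩
      refine ⟨xa + xb, fun k => ya k + yb k +
        xb 1 * (if k = 1 then -(starRingEnd ℂ) (xa 1) else xa k - (starRingEnd ℂ) (xa (k-1))), ?_⟩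
      rw [Units.val_mul, ha, hb, Gmat_mul]
    · exact ⟨0, 0, (Gmat_one n).symm⟩
    · rintro a ⟨xa, ya, ha⟩
      obtain ⟨x', y', h1, h2⟩ := Gmat_inv n xa ya
      refine ⟨x', y', ?_⟩
      have key : (↑a : Matrix (Fin (n+3)) (Fin (n+3)) ℂ) * Gmat n x' y' = 1 := by
        rw [ha]; exact h1
      calc (↑(a⁻¹) : Matrix (Fin (n+3)) (Fin (n+3)) ℂ)
          = ↑(a⁻¹) * ((↑a : Matrix (Fin (n+3)) (Fin (n+3)) ℂ) * Gmat n x' y') := by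
            rw [key, mul_one]
        _ = (↑(a⁻¹) * (↑a : Matrix (Fin (n+3)) (Fin (n+3)) ℂ)) * Gmat n x' y' := by
            rw [mul_assoc]
        _ = Gmat n x' y' := by rw [Units.inv_mul, one_mul]
end

section
/- With β_1 = ω̄_1 ∧ dx̄_2 ∧ ... ∧ dx̄_{n-1} and β_k = dx_2 ∧ ... ∧ dx_{k-1} ∧ ω_k ∧ dx̄_k ∧ ... ∧ dx̄_{n-1} for 2 ≤ k ≤ n, the following identities hold: ∂̄β_1 = 0; ∂β_1 = -∂̄β_2 = dx_1 ∧ dx̄_1 ∧ ... ∧ dx̄_{n-1}; for 2 ≤ k ≤ n-1, ∂̄β_{k+1} = -∂β_k = (-1)^k dx_2 ∧ ... ∧ dx_k ∧ dx_1 ∧ dx̄_k ∧ ... ∧ dx̄_{n-1}; and ∂β_n = dx_1 ∧ ... ∧ dx_n. -/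
/-!
Each `β_k` is affine in the point: a constant form plus `f • γ` with `γ` constant and `f` a
real-linear function of `x`, namely `f = x_1` for `k = 1` and `f = x̄_{k-1} - x_k` for `k ≥ 2`.
Hence `∂β_k = ∂f ∧ γ` and `∂̄β_k = ∂̄f ∧ γ`, with `∂f, ∂̄f` constant 1-forms read off from the
Wirtinger derivatives of `f`. The rest is sign bookkeeping: every form that occurs is `±` a
basis form whose index set is a union of a block of `dx`'s and a block of `dx̄`'s, and inserting
a covector past a block of `a` covectors costs `(-1)^a`.
-/

noncomputable section

/-- The underlying manifold `ℂ^{2n}` with coordinates `(x, y)`. -/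
abbrev Pt (n : ℕ) := (Fin n → ℂ) × (Fin n → ℂ)

/-- Complex-valued constant-coefficient exterior forms on `ℂ^{2n}`: coefficients indexed
by subsets of the `4n` complexified coordinate covectors
`dx_k, dx̄_k, dy_k, dȳ_k` (0-indexed `k`). -/
abbrev Lam (n : ℕ) := Finset (Fin (4 * n)) → ℂ

/-- The Koszul sign for merging two disjoint increasing index sets. -/
def wsign {n : ℕ} (s t : Finset (Fin (4 * n))) : ℂ :=
  (-1 : ℂ) ^ (((s ×ˢ t).filter fun ab => ab.2 < ab.1).card)

/-- Wedge product on `Lam n`. -/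
def wedge {n : ℕ} (f g : Lam n) : Lam n := fun u =>
  ∑ s ∈ u.powerset, wsign s (u \ s) * f s * g (u \ s)

/-- The unit form `1`. -/
def oneF (n : ℕ) : Lam n := fun s => if s = ∅ then 1 else 0

/-- The basis covector with index `i`. -/
def gen {n : ℕ} (i : Fin (4 * n)) : Lam n := fun s => if s = {i} then 1 else 0

/-- `genN n r j`: the covector `dx_j` (`r = 0`), `dx̄_j` (`r = 1`), `dy_j` (`r = 2`),
`dȳ_j` (`r = 3`); here `j` is the 0-indexed coordinate index. -/
def genN (n r j : ℕ) : Lam n := if h : 4 * j + r < 4 * n then gen ⟨4 * j + r, h⟩ else 0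

/-- Wedge product of the covectors of type `r` with 0-indexed coordinate indices
`a, a+1, …, a+len-1`. -/
def prodG (n r a len : ℕ) : Lam n :=
  ((List.range' a len).map (genN n r)).foldr wedge (oneF n)

/-- The real tangent direction `c ⬝ ∂/∂x_k`. -/
def ex (n : ℕ) (k : Fin n) (c : ℂ) : Pt n := (Pi.single k c, 0)

/-- The real tangent direction `c ⬝ ∂/∂y_k`. -/
def ey (n : ℕ) (k : Fin n) (c : ℂ) : Pt n := (0, Pi.single k c)

/-- Holomorphic Wirtinger derivative of a form-valued function along the complex
direction whose underlying real directions are `v` and `vI = i ⬝ v`. -/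
def wirtP {n : ℕ} (F : Pt n → Lam n) (p : Pt n) (v vI : Pt n) : Lam n :=
  (2 : ℂ)⁻¹ • (fderiv ℝ F p v - Complex.I • fderiv ℝ F p vI)

/-- Antiholomorphic Wirtinger derivative. -/
def wirtM {n : ℕ} (F : Pt n → Lam n) (p : Pt n) (v vI : Pt n) : Lam n :=
  (2 : ℂ)⁻¹ • (fderiv ℝ F p v + Complex.I • fderiv ℝ F p vI)

/-- The operator `∂`, the `(1,0)`-part of the exterior derivative:
`∂F = Σ_k dx_k ∧ ∂F/∂x_k + dy_k ∧ ∂F/∂y_k`. -/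
def pdel {n : ℕ} (F : Pt n → Lam n) : Pt n → Lam n := fun p =>
  ∑ k : Fin n,
    (wedge (genN n 0 k) (wirtP F p (ex n k 1) (ex n k Complex.I)) +
     wedge (genN n 2 k) (wirtP F p (ey n k 1) (ey n k Complex.I)))

/-- The operator `∂̄`, the `(0,1)`-part of the exterior derivative:
`∂̄F = Σ_k dx̄_k ∧ ∂F/∂x̄_k + dȳ_k ∧ ∂F/∂ȳ_k`. -/
def pdelBar {n : ℕ} (F : Pt n → Lam n) : Pt n → Lam n := fun p =>
  ∑ k : Fin n,
    (wedge (genN n 1 k) (wirtM F p (ex n k 1) (ex n k Complex.I)) +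
     wedge (genN n 3 k) (wirtM F p (ey n k 1) (ey n k Complex.I)))

/-- The exterior derivative `d = ∂ + ∂̄`. -/
def extD {n : ℕ} (F : Pt n → Lam n) : Pt n → Lam n := fun p => pdel F p + pdelBar F p

/-- The form `ω_{j+1}` (0-indexed `j`): `ω_1 = dy_1 + x̄_1 dx_1` and
`ω_k = dy_k + (x̄_{k-1} - x_k) dx_1` for `k ≥ 2`. -/
def omegaF {n : ℕ} (j : Fin n) : Pt n → Lam n := fun p =>
  genN n 2 j +
    (if (j : ℕ) = 0 then (starRingEnd ℂ) (p.1 j)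
     else (starRingEnd ℂ) (p.1 ⟨(j : ℕ) - 1, lt_of_le_of_lt (Nat.sub_le _ _) j.isLt⟩)
       - p.1 j) • genN n 0 0

/-- The form `ω_j` with 1-indexed `j ∈ {1, …, n}` (junk value `0` otherwise). -/
def omegaN (n j : ℕ) : Pt n → Lam n :=
  if h : j - 1 < n then omegaF ⟨j - 1, h⟩ else 0

/-- The complex conjugate form `ω̄_1 = dȳ_1 + x_1 dx̄_1`. -/
def omegaBar1 (n : ℕ) : Pt n → Lam n := fun p =>
  genN n 3 0 + (if h : 0 < n then p.1 ⟨0, h⟩ else 0) • genN n 1 0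

/-- The form `β_k` (1-indexed `k`): `β_1 = ω̄_1 ∧ dx̄_2 ∧ ⋯ ∧ dx̄_{n-1}` and
`β_k = dx_2 ∧ ⋯ ∧ dx_{k-1} ∧ ω_k ∧ dx̄_k ∧ ⋯ ∧ dx̄_{n-1}` for `2 ≤ k ≤ n`. -/
def betaF (n k : ℕ) : Pt n → Lam n :=
  if k = 1 then fun p => wedge (omegaBar1 n p) (prodG n 1 1 (n - 2))
  else fun p =>
    wedge (prodG n 0 1 (k - 2)) (wedge (omegaN n k p) (prodG n 1 (k - 1) (n - k)))

end

open Finset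

namespace BetaZigzag

noncomputable section

variable {n : ℕ}

lemma wedge_add_left (f g h : Lam n) : wedge (f + g) h = wedge f h + wedge g h := by
  funext u
  simp only [wedge, Pi.add_apply, mul_add, add_mul, sum_add_distrib]

lemma wedge_add_right (f g h : Lam n) : wedge f (g + h) = wedge f g + wedge f h := by
  funext u
  simp only [wedge, Pi.add_apply, mul_add, sum_add_distrib]

lemma wedge_smul_left (c : ℂ) (f g : Lam n) : wedge (c • f) g = c • wedge f g := by
  funext u
  simp only [wedge, Pi.smul_apply, smul_eq_mul, mul_sum]
  exact sum_congr rfl fun _ _ => by ring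

lemma wedge_smul_right (c : ℂ) (f g : Lam n) : wedge f (c • g) = c • wedge f g := by
  funext u
  simp only [wedge, Pi.smul_apply, smul_eq_mul, mul_sum]
  exact sum_congr rfl fun _ _ => by ring

def wedgeBilin (n : ℕ) : Lam n →ₗ[ℂ] Lam n →ₗ[ℂ] Lam n :=
  LinearMap.mk₂ ℂ wedge wedge_add_left wedge_smul_left wedge_add_right wedge_smul_right

lemma wedge_zero_left (g : Lam n) : wedge 0 g = 0 :=
  (wedgeBilin n).map_zero₂ g

lemma wedge_zero_right (f : Lam n) : wedge f 0 = 0 :=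
  (wedgeBilin n f).map_zero

lemma wedge_neg_left (f g : Lam n) : wedge (-f) g = -wedge f g :=
  (wedgeBilin n).map_neg₂ f g

lemma wedge_sum_left {ι : Type*} (s : Finset ι) (f : ι → Lam n) (g : Lam n) :
    wedge (∑ i ∈ s, f i) g = ∑ i ∈ s, wedge (f i) g :=
  (wedgeBilin n).map_sum₂ s f g

lemma wedge_oneF_left (f : Lam n) : wedge (oneF n) f = f := by
  funext u
  rw [wedge, sum_eq_single_of_mem ∅ (empty_mem_powerset u) fun s _ hs => by simp [oneF, hs]]
  simp [oneF, wsign]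

lemma wsign_union_right {s t v : Finset (Fin (4 * n))} (h : Disjoint t v) :
    wsign s (t ∪ v) = wsign s t * wsign s v := by
  rw [wsign, wsign, wsign, ← pow_add, product_union, filter_union,
    card_union_of_disjoint (disjoint_filter_filter (disjoint_product.2 (Or.inr h)))]

lemma wsign_of_forall_lt {s t : Finset (Fin (4 * n))} (h : ∀ a ∈ s, ∀ b ∈ t, a < b) :
    wsign s t = 1 := by
  rw [wsign, filter_eq_empty_iff.2 fun ab hab => ?_, card_empty, pow_zero]
  rw [mem_product] at hab
  exact (h _ hab.1 _ hab.2).asymm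

lemma wsign_of_forall_gt {s t : Finset (Fin (4 * n))} (h : ∀ a ∈ s, ∀ b ∈ t, b < a) :
    wsign s t = (-1) ^ (#s * #t) := by
  rw [wsign, filter_true_of_mem fun ab hab => ?_, card_product]
  rw [mem_product] at hab
  exact h _ hab.1 _ hab.2

def basisForm (S : Finset (Fin (4 * n))) : Lam n := fun s => if s = S then 1 else 0

lemma wedge_basisForm_of_disjoint {S T : Finset (Fin (4 * n))} (h : Disjoint S T) :
    wedge (basisForm S) (basisForm T) = wsign S T • basisForm (S ∪ T) := by
  funext u
  by_cases hu : u = S ∪ T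
  · subst hu
    rw [wedge, sum_eq_single_of_mem S (mem_powerset.2 subset_union_left)
      fun s _ hs => by simp [basisForm, hs]]
    simp [basisForm, union_sdiff_cancel_left h]
  · refine (sum_eq_zero fun s hs => ?_).trans (by simp [basisForm, hu])
    by_cases hs' : s = S
    · subst hs'
      have hT : u \ s ≠ T := fun hT =>
        hu (hT ▸ (union_sdiff_of_subset (mem_powerset.1 hs)).symm)
      simp [basisForm, hT]
    · simp [basisForm, hs']

lemma wedge_basisForm_of_lt {S T : Finset (Fin (4 * n))} (h : ∀ a ∈ S, ∀ b ∈ T, a < b) :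
    wedge (basisForm S) (basisForm T) = basisForm (S ∪ T) := by
  rw [wedge_basisForm_of_disjoint (disjoint_left.2 fun a ha haT => (h a ha a haT).false),
    wsign_of_forall_lt h, one_smul]

lemma wedge_basisForm_sandwich {S A B : Finset (Fin (4 * n))}
    (hAS : ∀ a ∈ A, ∀ s ∈ S, a < s) (hSB : ∀ s ∈ S, ∀ b ∈ B, s < b) (hAB : Disjoint A B) :
    wedge (basisForm S) (basisForm (A ∪ B)) =
      (-1 : ℂ) ^ (#S * #A) • basisForm (A ∪ S ∪ B) := by
  have hS : Disjoint S (A ∪ B) := disjoint_union_right.2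
    ⟨disjoint_left.2 fun s hs hsA => (hAS s hsA s hs).false,
     disjoint_left.2 fun s hs hsB => (hSB s hs s hsB).false⟩
  rw [wedge_basisForm_of_disjoint hS, wsign_union_right hAB,
    wsign_of_forall_gt fun s hs a ha => hAS a ha s hs, wsign_of_forall_lt hSB, mul_one,
    union_left_comm, union_assoc]

def coordBlock (n r a b : ℕ) : Finset (Fin (4 * n)) :=
  univ.filter fun i => (i : ℕ) % 4 = r ∧ a ≤ (i : ℕ) / 4 ∧ (i : ℕ) / 4 < b

@[simp]
lemma mem_coordBlock {r a b : ℕ} {i : Fin (4 * n)} :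
    i ∈ coordBlock n r a b ↔ (i : ℕ) % 4 = r ∧ a ≤ (i : ℕ) / 4 ∧ (i : ℕ) / 4 < b := by
  simp [coordBlock]

lemma card_coordBlock {r a b : ℕ} (hr : r < 4) (hb : b ≤ n) :
    #(coordBlock n r a b) = b - a := by
  have himage : (coordBlock n r a b).map Fin.valEmbedding =
      (Ico a b).image fun j => 4 * j + r := by
    ext m
    simp only [mem_map, mem_coordBlock, Fin.valEmbedding_apply, mem_image, mem_Ico]
    constructor
    · rintro ⟨i, hi, rfl⟩
      exact ⟨i / 4, ⟨hi.2.1, hi.2.2⟩, by omega⟩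
    · rintro ⟨j, hj, rfl⟩
      exact ⟨⟨4 * j + r, by omega⟩, by simp only; omega, rfl⟩
  rw [← card_map Fin.valEmbedding, himage,
    card_image_of_injective _ fun j k h => by simpa using h, Nat.card_Ico]

lemma genN_eq_basisForm {r j : ℕ} (h : 4 * j + r < 4 * n) :
    genN n r j = basisForm {⟨4 * j + r, h⟩} := by
  rw [genN, dif_pos h]
  rfl

lemma prodG_succ (r a l : ℕ) :
    prodG n r a (l + 1) = wedge (genN n r a) (prodG n r (a + 1) l) :=
  rfl

lemma prodG_eq_basisForm {r : ℕ} (hr : r < 4) {a l : ℕ} (h : a + l ≤ n) :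
    prodG n r a l = basisForm (coordBlock n r a (a + l)) := by
  induction l generalizing a with
  | zero =>
    rw [Nat.add_zero, show coordBlock n r a a = ∅ by ext; simp]
    rfl
  | succ l ih =>
    rw [prodG_succ, ih (by omega), genN_eq_basisForm (by omega),
      wedge_basisForm_of_lt fun i hi j hj => by
        simp only [mem_coordBlock, mem_singleton, Fin.ext_iff, Fin.lt_def] at hi hj ⊢; omega]
    congr 1
    ext i
    simp only [mem_union, mem_singleton, mem_coordBlock, Fin.ext_iff]
    omega

-- `dx_2 ∧ ⋯ ∧ dx_{a+1} ∧ dx_1 ∧ dx̄_{b+1} ∧ ⋯ ∧ dx̄_{b+l}` in the paper's 1-indexed notation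
def zigzag (n a b l : ℕ) : Lam n :=
  wedge (prodG n 0 1 a) (wedge (genN n 0 0) (prodG n 1 b l))

lemma zigzag_eq_basisForm {a b l : ℕ} (hab : a ≤ b) (hl : b + l + 1 = n) :
    zigzag n a b l =
      (-1 : ℂ) ^ a • basisForm (coordBlock n 0 0 (a + 1) ∪ coordBlock n 1 b (n - 1)) := by
  rw [zigzag, prodG_eq_basisForm (by omega) (by omega), prodG_eq_basisForm (by omega) (by omega),
    genN_eq_basisForm (by omega),
    wedge_basisForm_of_lt fun i hi j hj => by
      simp only [mem_coordBlock, mem_singleton, Fin.ext_iff, Fin.lt_def] at hi hj ⊢; omega,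
    wedge_basisForm_sandwich
      (fun i hi j hj => by
        simp only [mem_coordBlock, mem_singleton, Fin.ext_iff, Fin.lt_def] at hi hj ⊢; omega)
      (fun i hi j hj => by simp only [mem_coordBlock, Fin.lt_def] at hi hj ⊢; omega)
      (disjoint_left.2 fun i hi hj => by
        simp only [mem_coordBlock, mem_singleton, Fin.ext_iff] at hi hj; omega),
    card_coordBlock (by omega) (by omega), card_singleton, mul_one, Nat.add_sub_cancel_left]
  congr 2
  ext i
  simp only [mem_union, mem_singleton, mem_coordBlock, Fin.ext_iff]
  omega

lemma wedge_dx_basisForm {a b c : ℕ} (hab : a ≤ b) (ha : a < n) :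
    wedge (genN n 0 a) (basisForm (coordBlock n 0 0 a ∪ coordBlock n 1 b c)) =
      (-1 : ℂ) ^ a • basisForm (coordBlock n 0 0 (a + 1) ∪ coordBlock n 1 b c) := by
  rw [genN_eq_basisForm (by omega),
    wedge_basisForm_sandwich
      (fun i hi j hj => by
        simp only [mem_coordBlock, mem_singleton, Fin.ext_iff, Fin.lt_def] at hi hj ⊢; omega)
      (fun i hi j hj => by
        simp only [mem_coordBlock, mem_singleton, Fin.ext_iff, Fin.lt_def] at hi hj ⊢; omega)
      (disjoint_left.2 fun i hi hj => by simp only [mem_coordBlock] at hi hj; omega),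
    card_coordBlock (by omega) (by omega), card_singleton, one_mul, Nat.sub_zero]
  congr 2
  ext i
  simp only [mem_union, mem_singleton, mem_coordBlock, Fin.ext_iff]
  omega

lemma wedge_dxbar_basisForm {a b c : ℕ} (hab : a ≤ b + 1) (hbc : b < c) (hb : b < n) :
    wedge (genN n 1 b) (basisForm (coordBlock n 0 0 a ∪ coordBlock n 1 (b + 1) c)) =
      (-1 : ℂ) ^ a • basisForm (coordBlock n 0 0 a ∪ coordBlock n 1 b c) := by
  rw [genN_eq_basisForm (by omega),
    wedge_basisForm_sandwich
      (fun i hi j hj => by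
        simp only [mem_coordBlock, mem_singleton, Fin.ext_iff, Fin.lt_def] at hi hj ⊢; omega)
      (fun i hi j hj => by
        simp only [mem_coordBlock, mem_singleton, Fin.ext_iff, Fin.lt_def] at hi hj ⊢; omega)
      (disjoint_left.2 fun i hi hj => by simp only [mem_coordBlock] at hi hj; omega),
    card_coordBlock (by omega) (by omega), card_singleton, one_mul, Nat.sub_zero]
  congr 2
  ext i
  simp only [mem_union, mem_singleton, mem_coordBlock, Fin.ext_iff]
  omega

open Complex ContinuousLinearMap

def holPart (L : (Fin n → ℂ) →L[ℝ] ℂ) : Lam n :=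
  ∑ m : Fin n, ((2 : ℂ)⁻¹ * (L (Pi.single m 1) - I * L (Pi.single m I))) • genN n 0 m

def antiholPart (L : (Fin n → ℂ) →L[ℝ] ℂ) : Lam n :=
  ∑ m : Fin n, ((2 : ℂ)⁻¹ * (L (Pi.single m 1) + I * L (Pi.single m I))) • genN n 1 m

lemma fderiv_const_add_smul (C₁ C₂ : Lam n) (L : (Fin n → ℂ) →L[ℝ] ℂ) (p : Pt n) :
    fderiv ℝ (fun q : Pt n => C₁ + L q.1 • C₂) p =
      (L.comp (fst ℝ (Fin n → ℂ) (Fin n → ℂ))).smulRight C₂ := by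
  rw [fderiv_const_add]
  exact ((L.comp (fst ℝ (Fin n → ℂ) (Fin n → ℂ))).smulRight C₂).fderiv

lemma wirtP_const_add_smul (C₁ C₂ : Lam n) (L : (Fin n → ℂ) →L[ℝ] ℂ) (p v vI : Pt n) :
    wirtP (fun q : Pt n => C₁ + L q.1 • C₂) p v vI = ((2 : ℂ)⁻¹ * (L v.1 - I * L vI.1)) • C₂ := by
  simp only [wirtP, fderiv_const_add_smul, smulRight_apply, coe_comp, Function.comp_apply,
    coe_fst', smul_smul, ← sub_smul]

lemma wirtM_const_add_smul (C₁ C₂ : Lam n) (L : (Fin n → ℂ) →L[ℝ] ℂ) (p v vI : Pt n) :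
    wirtM (fun q : Pt n => C₁ + L q.1 • C₂) p v vI = ((2 : ℂ)⁻¹ * (L v.1 + I * L vI.1)) • C₂ := by
  simp only [wirtM, fderiv_const_add_smul, smulRight_apply, coe_comp, Function.comp_apply,
    coe_fst', smul_smul, ← add_smul]

lemma pdel_const_add_smul (C₁ C₂ : Lam n) (L : (Fin n → ℂ) →L[ℝ] ℂ) :
    pdel (fun q : Pt n => C₁ + L q.1 • C₂) = fun _ => wedge (holPart L) C₂ := by
  funext p
  simp only [pdel, wirtP_const_add_smul, ex, ey, map_zero, mul_zero, sub_zero, zero_smul,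
    wedge_zero_right, add_zero, holPart, wedge_sum_left, wedge_smul_left, wedge_smul_right]

lemma pdelBar_const_add_smul (C₁ C₂ : Lam n) (L : (Fin n → ℂ) →L[ℝ] ℂ) :
    pdelBar (fun q : Pt n => C₁ + L q.1 • C₂) = fun _ => wedge (antiholPart L) C₂ := by
  funext p
  simp only [pdelBar, wirtM_const_add_smul, ex, ey, map_zero, mul_zero, add_zero, zero_smul,
    wedge_zero_right, antiholPart, wedge_sum_left, wedge_smul_left, wedge_smul_right]

def xCoord (j : Fin n) : (Fin n → ℂ) →L[ℝ] ℂ := proj j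

def xbarCoord (j : Fin n) : (Fin n → ℂ) →L[ℝ] ℂ := (conjCLE : ℂ →L[ℝ] ℂ).comp (xCoord j)

lemma holPart_sub (L L' : (Fin n → ℂ) →L[ℝ] ℂ) : holPart (L - L') = holPart L - holPart L' := by
  simp only [holPart, ← sum_sub_distrib, ← sub_smul, sub_apply]
  exact sum_congr rfl fun _ _ => by ring_nf

lemma antiholPart_sub (L L' : (Fin n → ℂ) →L[ℝ] ℂ) :
    antiholPart (L - L') = antiholPart L - antiholPart L' := by
  simp only [antiholPart, ← sum_sub_distrib, ← sub_smul, sub_apply]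
  exact sum_congr rfl fun _ _ => by ring_nf

lemma xCoord_single (j m : Fin n) (c : ℂ) :
    xCoord j (Pi.single m c) = if m = j then c else 0 := by
  simp [xCoord, Pi.single_apply, eq_comm]

lemma xbarCoord_single (j m : Fin n) (c : ℂ) :
    xbarCoord j (Pi.single m c) = if m = j then starRingEnd ℂ c else 0 := by
  simp only [xbarCoord, coe_comp, Function.comp_apply, xCoord_single]
  split_ifs <;> simp

lemma holPart_xCoord (j : Fin n) : holPart (xCoord j) = genN n 0 j := by
  rw [holPart, Fintype.sum_eq_single j fun m hm => by simp [xCoord_single, hm]]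
  norm_num [xCoord_single]

lemma antiholPart_xCoord (j : Fin n) : antiholPart (xCoord j) = 0 :=
  Fintype.sum_eq_zero _ fun m => by by_cases hm : m = j <;> simp [xCoord_single, hm]

lemma holPart_xbarCoord (j : Fin n) : holPart (xbarCoord j) = 0 :=
  Fintype.sum_eq_zero _ fun m => by by_cases hm : m = j <;> simp [xbarCoord_single, hm]

lemma antiholPart_xbarCoord (j : Fin n) : antiholPart (xbarCoord j) = genN n 1 j := by
  rw [antiholPart, Fintype.sum_eq_single j fun m hm => by simp [xbarCoord_single, hm]]
  norm_num [xbarCoord_single]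

lemma betaF_one (hn : 2 ≤ n) : betaF n 1 = fun p =>
    wedge (genN n 3 0) (prodG n 1 1 (n - 2)) +
      xCoord ⟨0, by omega⟩ p.1 • prodG n 1 0 (n - 1) := by
  funext p
  rw [betaF, if_pos rfl, omegaBar1, dif_pos (by omega), wedge_add_left, wedge_smul_left,
    show n - 1 = n - 2 + 1 by omega, prodG_succ]
  rfl

lemma betaF_add_two {j : ℕ} (hj : j + 2 ≤ n) : betaF n (j + 2) = fun p =>
    wedge (prodG n 0 1 j) (wedge (genN n 2 (j + 1)) (prodG n 1 (j + 1) (n - (j + 2)))) +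
      (xbarCoord ⟨j, by omega⟩ - xCoord ⟨j + 1, by omega⟩ : (Fin n → ℂ) →L[ℝ] ℂ) p.1 •
        zigzag n j (j + 1) (n - (j + 2)) := by
  funext p
  rw [betaF, if_neg (by omega), omegaN, dif_pos (by omega), omegaF, if_neg (by simp),
    wedge_add_left, wedge_smul_left, wedge_add_right, wedge_smul_right]
  rfl

lemma pdel_betaF_one (hn : 2 ≤ n) :
    pdel (betaF n 1) = fun _ => wedge (genN n 0 0) (prodG n 1 0 (n - 1)) := by
  rw [betaF_one hn, pdel_const_add_smul, holPart_xCoord]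

lemma pdelBar_betaF_one (hn : 2 ≤ n) : pdelBar (betaF n 1) = fun _ => 0 := by
  rw [betaF_one hn, pdelBar_const_add_smul, antiholPart_xCoord, wedge_zero_left]

lemma pdel_betaF_add_two {j : ℕ} (hj : j + 2 ≤ n) : pdel (betaF n (j + 2)) =
    fun _ => -wedge (genN n 0 (j + 1)) (zigzag n j (j + 1) (n - (j + 2))) := by
  rw [betaF_add_two hj, pdel_const_add_smul, holPart_sub, holPart_xbarCoord, holPart_xCoord,
    zero_sub, wedge_neg_left]

lemma pdelBar_betaF_add_two {j : ℕ} (hj : j + 2 ≤ n) : pdelBar (betaF n (j + 2)) =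
    fun _ => wedge (genN n 1 j) (zigzag n j (j + 1) (n - (j + 2))) := by
  rw [betaF_add_two hj, pdelBar_const_add_smul, antiholPart_sub, antiholPart_xbarCoord,
    antiholPart_xCoord, sub_zero]

lemma pdel_betaF {k : ℕ} (hk : 2 ≤ k) (hkn : k ≤ n) :
    pdel (betaF n k) = fun _ => -((-1 : ℂ) ^ k • zigzag n (k - 1) (k - 1) (n - k)) := by
  obtain ⟨j, rfl⟩ : ∃ j, k = j + 2 := ⟨k - 2, by omega⟩
  rw [pdel_betaF_add_two hkn, show j + 2 - 1 = j + 1 by omega]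
  funext _
  rw [zigzag_eq_basisForm (by omega) (by omega), zigzag_eq_basisForm le_rfl (by omega),
    wedge_smul_right, wedge_dx_basisForm le_rfl (by omega), smul_smul, smul_smul]
  congr 2
  ring

lemma pdelBar_betaF_succ {k : ℕ} (hk : 1 ≤ k) (hkn : k < n) :
    pdelBar (betaF n (k + 1)) = fun _ => (-1 : ℂ) ^ k • zigzag n (k - 1) (k - 1) (n - k) := by
  obtain ⟨j, rfl⟩ : ∃ j, k = j + 1 := ⟨k - 1, by omega⟩
  rw [pdelBar_betaF_add_two hkn, Nat.add_sub_cancel]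
  funext _
  rw [zigzag_eq_basisForm (by omega) (by omega), zigzag_eq_basisForm le_rfl (by omega),
    wedge_smul_right, wedge_dxbar_basisForm le_rfl (by omega) (by omega), smul_smul, smul_smul,
    mul_comm ((-1 : ℂ) ^ j)]

lemma pdelBar_betaF_two (hn : 2 ≤ n) :
    pdelBar (betaF n 2) = fun _ => -wedge (genN n 0 0) (prodG n 1 0 (n - 1)) := by
  rw [pdelBar_betaF_succ le_rfl (by omega), Nat.sub_self, zigzag,
    show prodG n 0 1 0 = oneF n from rfl, wedge_oneF_left, pow_one, neg_one_smul]

lemma pdel_betaF_self (hn : 2 ≤ n) : pdel (betaF n n) = fun _ => prodG n 0 0 n := by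
  rw [pdel_betaF hn le_rfl]
  funext _
  rw [zigzag_eq_basisForm le_rfl (by omega), prodG_eq_basisForm (by omega) (by omega),
    Nat.sub_add_cancel (by omega : 1 ≤ n), Nat.zero_add,
    show coordBlock n 1 (n - 1) (n - 1) = ∅ by ext; simp, union_empty, smul_smul, ← pow_add,
    Odd.neg_one_pow ⟨n - 1, by omega⟩, neg_one_smul, neg_neg]

end

end BetaZigzag

/-- the zig-zag identities for the forms `β_1, …, β_n`:
`∂̄β_1 = 0`, `∂β_1 = -∂̄β_2 = dx_1 ∧ dx̄_1 ∧ ⋯ ∧ dx̄_{n-1}`, for `2 ≤ k ≤ n-1`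
`∂̄β_{k+1} = -∂β_k = (-1)^k dx_2 ∧ ⋯ ∧ dx_k ∧ dx_1 ∧ dx̄_k ∧ ⋯ ∧ dx̄_{n-1}`, and
`∂β_n = dx_1 ∧ ⋯ ∧ dx_n` (all indices 1-indexed). -/
theorem beta_zigzag (n : ℕ) (hn : 2 ≤ n) :
    pdelBar (betaF n 1) = (fun _ => 0) ∧
    pdel (betaF n 1) = (fun _ => wedge (genN n 0 0) (prodG n 1 0 (n - 1))) ∧
    pdelBar (betaF n 2) = (fun _ => -(wedge (genN n 0 0) (prodG n 1 0 (n - 1)))) ∧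
    (∀ k : ℕ, 2 ≤ k → k ≤ n - 1 →
      pdelBar (betaF n (k + 1)) =
        (fun _ => ((-1 : ℂ) ^ k) •
          wedge (prodG n 0 1 (k - 1)) (wedge (genN n 0 0) (prodG n 1 (k - 1) (n - k)))) ∧
      pdel (betaF n k) =
        fun _ => -(((-1 : ℂ) ^ k) •
          wedge (prodG n 0 1 (k - 1)) (wedge (genN n 0 0) (prodG n 1 (k - 1) (n - k))))) ∧
    pdel (betaF n n) = fun _ => prodG n 0 0 n :=
  ⟨BetaZigzag.pdelBar_betaF_one hn, BetaZigzag.pdel_betaF_one hn, BetaZigzag.pdelBar_betaF_two hn,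
    fun _ hk hkn =>
      ⟨BetaZigzag.pdelBar_betaF_succ (by omega) (by omega), BetaZigzag.pdel_betaF hk (by omega)⟩,
    BetaZigzag.pdel_betaF_self hn⟩
end

section
/- The total degree (2n-1)-form β_1 + β_2 + ... + β_n on ℂ^{2n} satisfies d(β_1 + ... + β_n) = dx_1 ∧ dx_2 ∧ ... ∧ dx_n, i.e., the holomorphic n-form dx_1 ∧ ... ∧ dx_n is exact as a complex-valued differential form on the total de Rham complex. -/
/-!
Every `β_k` is affine in the coordinates, and its constant part is closed. The variable part of
`β_1` is `x_1 dx̄_1 ∧ ⋯ ∧ dx̄_{n-1}`; for `k ≥ 2` that of `β_k` is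
`(x̄_{k-1} - x_k) dx_2 ∧ ⋯ ∧ dx_{k-1} ∧ dx_1 ∧ dx̄_k ∧ ⋯ ∧ dx̄_{n-1}`, which is
`(-1)^k (x̄_{k-1} - x_k) dx_1 ∧ ⋯ ∧ dx_{k-1} ∧ dx̄_k ∧ ⋯ ∧ dx̄_{n-1}`. With
`W_k = dx_1 ∧ ⋯ ∧ dx_k ∧ dx̄_k ∧ ⋯ ∧ dx̄_{n-1}` this gives `dβ_1 = W_1` and
`dβ_k = W_k - W_{k-1}`: both `dx̄_{k-1}` and `dx_k` pass `k - 1` covectors on their way into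
place. The sum telescopes to `W_n = dx_1 ∧ ⋯ ∧ dx_n`.
-/

open Finset

section Wedge

variable {n : ℕ}

lemma wedge_add_right (f g h : Lam n) : wedge f (g + h) = wedge f g + wedge f h := by
  funext u
  simp [wedge, mul_add, sum_add_distrib]

lemma wedge_add_left (f g h : Lam n) : wedge (f + g) h = wedge f h + wedge g h := by
  funext u
  simp [wedge, add_mul, mul_add, sum_add_distrib]

lemma wedge_smul_left (c : ℂ) (f g : Lam n) : wedge (c • f) g = c • wedge f g := by
  funext u
  simp only [wedge, Pi.smul_apply, smul_eq_mul, mul_sum]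
  exact sum_congr rfl fun _ _ => by ring

lemma wedge_smul_right (c : ℂ) (f g : Lam n) : wedge f (c • g) = c • wedge f g := by
  funext u
  simp only [wedge, Pi.smul_apply, smul_eq_mul, mul_sum]
  exact sum_congr rfl fun _ _ => by ring

lemma wedge_zero (f : Lam n) : wedge f 0 = 0 := by
  funext u
  simp [wedge]

lemma wedge_neg_right (f g : Lam n) : wedge f (-g) = -wedge f g := by
  funext u
  simp [wedge]

noncomputable def basisForm (s : Finset (Fin (4 * n))) : Lam n := Pi.single s 1

lemma wedge_basisForm {s t : Finset (Fin (4 * n))} (hst : Disjoint s t) :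
    wedge (basisForm s) (basisForm t) =
      (-1 : ℂ) ^ #{ab ∈ s ×ˢ t | ab.2 < ab.1} • basisForm (s ∪ t) := by
  funext u
  simp only [wedge, basisForm, Pi.single_apply, mul_ite, mul_one, mul_zero, Pi.smul_apply,
    smul_eq_mul]
  by_cases hu : u = s ∪ t
  · subst hu
    rw [sum_eq_single_of_mem s (mem_powerset.mpr subset_union_left) fun x _ hx => by simp [hx]]
    simp [union_sdiff_cancel_left hst, wsign]
  · rw [if_neg hu]
    refine sum_eq_zero fun x hx => ?_
    split_ifs with ht hs
    · subst hs
      exact absurd (by rw [← ht, union_sdiff_of_subset (mem_powerset.mp hx)]) hu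
    all_goals rfl

lemma wedge_singleton_basisForm {i : Fin (4 * n)} {t : Finset (Fin (4 * n))} (hi : i ∉ t) :
    wedge (basisForm {i}) (basisForm t) =
      (-1 : ℂ) ^ #{b ∈ t | b < i} • basisForm (insert i t) := by
  rw [wedge_basisForm (disjoint_singleton_left.mpr hi), singleton_product, filter_map,
    card_map, insert_eq]
  rfl

end Wedge

section IndexSets

variable {n : ℕ}

def idxSet (n r a len : ℕ) : Finset (Fin (4 * n)) :=
  {i | (i : ℕ) % 4 = r ∧ a ≤ (i : ℕ) / 4 ∧ (i : ℕ) / 4 < a + len}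

lemma mem_idxSet {r a len : ℕ} {i : Fin (4 * n)} :
    i ∈ idxSet n r a len ↔
      (i : ℕ) % 4 = r ∧ a ≤ (i : ℕ) / 4 ∧ (i : ℕ) / 4 < a + len := by
  simp [idxSet]

lemma card_idxSet {r a len : ℕ} (hr : r < 4) (h : a + len ≤ n) : #(idxSet n r a len) = len := by
  induction len generalizing a with
  | zero => simp [idxSet]
  | succ len ih =>
    have hins :
        idxSet n r a (len + 1) = insert ⟨4 * a + r, by omega⟩ (idxSet n r (a + 1) len) := by
      ext i
      simp only [mem_idxSet, mem_insert, Fin.ext_iff]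
      omega
    rw [hins, card_insert_of_notMem (by simp only [mem_idxSet]; omega), ih (by omega)]

lemma wedge_genN_basisForm {r j : ℕ} (h : 4 * j + r < 4 * n) {t : Finset (Fin (4 * n))}
    (hi : ⟨4 * j + r, h⟩ ∉ t) :
    wedge (genN n r j) (basisForm t) =
      (-1 : ℂ) ^ #{b ∈ t | b.val < 4 * j + r} • basisForm (insert ⟨4 * j + r, h⟩ t) := by
  have hgen : genN n r j = basisForm {⟨4 * j + r, h⟩} := by
    funext s
    simp [genN, h, gen, basisForm, Pi.single_apply]
  rw [hgen, wedge_singleton_basisForm hi]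
  rfl

lemma wedge_genN_basisForm_of_lt {r j : ℕ} (h : 4 * j + r < 4 * n) {t : Finset (Fin (4 * n))}
    (ht : ∀ b ∈ t, 4 * j + r < b.val) :
    wedge (genN n r j) (basisForm t) = basisForm (insert ⟨4 * j + r, h⟩ t) := by
  rw [wedge_genN_basisForm h fun hi => (ht _ hi).false,
    filter_eq_empty_iff.mpr fun b hb => (ht b hb).asymm, card_empty, pow_zero, one_smul]

lemma prodG_succ (r a len : ℕ) :
    prodG n r a (len + 1) = wedge (genN n r a) (prodG n r (a + 1) len) := by
  rw [prodG, prodG, List.range'_succ, List.map_cons, List.foldr_cons]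

lemma prodG_eq_basisForm {r a len : ℕ} (hr : r < 4) (h : a + len ≤ n) :
    prodG n r a len = basisForm (idxSet n r a len) := by
  induction len generalizing a with
  | zero =>
    have : idxSet n r a 0 = ∅ := by ext i; simp only [mem_idxSet, notMem_empty, iff_false]; omega
    funext s
    simp [prodG, oneF, this, basisForm, Pi.single_apply]
  | succ len ih =>
    rw [prodG_succ, ih (by omega),
      wedge_genN_basisForm_of_lt (by omega) fun b hb => by simp only [mem_idxSet] at hb; omega]
    congr 1
    ext i
    simp only [mem_insert, mem_idxSet, Fin.ext_iff]
    omega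

end IndexSets

section ExteriorDerivative

variable {n : ℕ}

lemma wirtP_add {F G : Pt n → Lam n} {p : Pt n} (hF : DifferentiableAt ℝ F p)
    (hG : DifferentiableAt ℝ G p) (v vI : Pt n) :
    wirtP (fun q => F q + G q) p v vI = wirtP F p v vI + wirtP G p v vI := by
  simp only [wirtP, fderiv_fun_add hF hG, add_apply, smul_add, smul_sub]
  abel

lemma wirtM_add {F G : Pt n → Lam n} {p : Pt n} (hF : DifferentiableAt ℝ F p)
    (hG : DifferentiableAt ℝ G p) (v vI : Pt n) :
    wirtM (fun q => F q + G q) p v vI = wirtM F p v vI + wirtM G p v vI := by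
  simp only [wirtM, fderiv_fun_add hF hG, add_apply, smul_add]
  abel

lemma extD_add {F G : Pt n → Lam n} {p : Pt n} (hF : DifferentiableAt ℝ F p)
    (hG : DifferentiableAt ℝ G p) :
    extD (fun q => F q + G q) p = extD F p + extD G p := by
  simp only [extD, pdel, pdelBar, wirtP_add hF hG, wirtM_add hF hG, wedge_add_right,
    sum_add_distrib]
  abel

lemma extD_const_add (C : Lam n) (F : Pt n → Lam n) :
    extD (fun q => C + F q) = extD F := by
  funext p
  simp only [extD, pdel, pdelBar, wirtP, wirtM, fderiv_const_add]

lemma extD_zero : extD (fun _ : Pt n => (0 : Lam n)) = 0 := by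
  funext p
  simp [extD, pdel, pdelBar, wirtP, wirtM, wedge_zero]

lemma extD_sum {ι : Type*} (s : Finset ι) (F : ι → Pt n → Lam n) {p : Pt n}
    (hF : ∀ k ∈ s, DifferentiableAt ℝ (F k) p) :
    extD (fun q => ∑ k ∈ s, F k q) p = ∑ k ∈ s, extD (F k) p := by
  classical
  induction s using Finset.induction_on with
  | empty => simp [extD_zero]
  | insert k s hk ih =>
    simp only [sum_insert hk]
    rw [extD_add (hF k (mem_insert_self k s))
      (DifferentiableAt.fun_sum fun i hi => hF i (mem_insert_of_mem hi)),
      ih fun i hi => hF i (mem_insert_of_mem hi)]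

lemma wirtP_clm_smul (c : Pt n →L[ℝ] ℂ) (η : Lam n) (p v vI : Pt n) :
    wirtP (fun q => c q • η) p v vI = (2⁻¹ * (c v - Complex.I * c vI)) • η := by
  simp only [wirtP, fderiv_smul_const c.differentiableAt, c.fderiv,
    ContinuousLinearMap.smulRight_apply, smul_smul, ← sub_smul]

lemma wirtM_clm_smul (c : Pt n →L[ℝ] ℂ) (η : Lam n) (p v vI : Pt n) :
    wirtM (fun q => c q • η) p v vI = (2⁻¹ * (c v + Complex.I * c vI)) • η := by
  simp only [wirtM, fderiv_smul_const c.differentiableAt, c.fderiv,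
    ContinuousLinearMap.smulRight_apply, smul_smul, ← add_smul]

noncomputable def coordL (j : Fin n) : Pt n →L[ℝ] ℂ :=
  (ContinuousLinearMap.proj j).comp (ContinuousLinearMap.fst ℝ _ _)

noncomputable def conjCoordL (j : Fin n) : Pt n →L[ℝ] ℂ :=
  Complex.conjCLE.toContinuousLinearMap.comp (coordL j)

@[simp] lemma coordL_apply (j : Fin n) (q : Pt n) : coordL j q = q.1 j := rfl

@[simp] lemma conjCoordL_apply (j : Fin n) (q : Pt n) : conjCoordL j q = starRingEnd ℂ (q.1 j) :=
  rfl

lemma extD_coordL_smul (j : Fin n) (η : Lam n) (p : Pt n) :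
    extD (fun q => coordL j q • η) p = wedge (genN n 0 j) η := by
  have hP : ∀ k : Fin n, 2⁻¹ * ((ex n k 1).1 j - Complex.I * (ex n k Complex.I).1 j) =
      if j = k then 1 else 0 := by
    intro k
    rcases eq_or_ne j k with rfl | h
    · norm_num [ex]
    · simp [ex, h]
  have hM : ∀ k : Fin n, 2⁻¹ * ((ex n k 1).1 j + Complex.I * (ex n k Complex.I).1 j) = 0 := by
    intro k
    rcases eq_or_ne j k with rfl | h <;> simp [ex, *]
  simp only [extD, pdel, pdelBar, wirtP_clm_smul, wirtM_clm_smul]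
  simp only [coordL_apply, hP, hM, ey]
  simp [wedge_zero, apply_ite (wedge _)]

lemma extD_conjCoordL_smul (j : Fin n) (η : Lam n) (p : Pt n) :
    extD (fun q => conjCoordL j q • η) p = wedge (genN n 1 j) η := by
  have hP : ∀ k : Fin n, 2⁻¹ * (starRingEnd ℂ ((ex n k 1).1 j) -
      Complex.I * starRingEnd ℂ ((ex n k Complex.I).1 j)) = 0 := by
    intro k
    rcases eq_or_ne j k with rfl | h <;> simp [ex, *]
  have hM : ∀ k : Fin n, 2⁻¹ * (starRingEnd ℂ ((ex n k 1).1 j) +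
      Complex.I * starRingEnd ℂ ((ex n k Complex.I).1 j)) = if j = k then 1 else 0 := by
    intro k
    rcases eq_or_ne j k with rfl | h
    · norm_num [ex]
    · simp [ex, h]
  simp only [extD, pdel, pdelBar, wirtP_clm_smul, wirtM_clm_smul]
  simp only [conjCoordL_apply, hP, hM, ey]
  simp [wedge_zero, apply_ite (wedge _)]

end ExteriorDerivative

section Beta

variable {n : ℕ}

/-- The support of `W_{k+1} = dx_1 ∧ ⋯ ∧ dx_{k+1} ∧ dx̄_{k+1} ∧ ⋯ ∧ dx̄_{n-1}`. -/
def wSet (n k : ℕ) : Finset (Fin (4 * n)) :=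
  idxSet n 0 0 (k + 1) ∪ idxSet n 1 k (n - (k + 1))

/-- The support of `dx_1 ∧ ⋯ ∧ dx_{m+1} ∧ dx̄_{m+2} ∧ ⋯ ∧ dx̄_{n-1}`. -/
def vSet (n m : ℕ) : Finset (Fin (4 * n)) :=
  idxSet n 0 0 (m + 1) ∪ idxSet n 1 (m + 1) (n - (m + 2))

lemma wedge_genN_basisForm_vSet {m r j : ℕ} (hm : m + 2 ≤ n) (h : 4 * j + r < 4 * n)
    (hlo : 4 * m < 4 * j + r) (hhi : 4 * j + r ≤ 4 * (m + 1)) :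
    wedge (genN n r j) (basisForm (vSet n m)) =
      (-1 : ℂ) ^ (m + 1) • basisForm (insert ⟨4 * j + r, h⟩ (vSet n m)) := by
  have hbelow : {b ∈ vSet n m | b.val < 4 * j + r} = idxSet n 0 0 (m + 1) := by
    ext i
    simp only [vSet, mem_filter, mem_union, mem_idxSet]
    omega
  rw [wedge_genN_basisForm h (by simp only [vSet, mem_union, mem_idxSet]; omega), hbelow,
    card_idxSet (by norm_num) (by omega)]

lemma betaF_one (hn : 0 < n) :
    betaF n 1 = fun p => wedge (genN n 3 0) (prodG n 1 1 (n - 2)) +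
      coordL ⟨0, hn⟩ p • wedge (genN n 1 0) (prodG n 1 1 (n - 2)) := by
  funext p
  simp [betaF, omegaBar1, hn, wedge_add_left, wedge_smul_left]

lemma wedge_prodG_genN_zero_prodG {m : ℕ} (hm : m + 2 ≤ n) :
    wedge (prodG n 0 1 m) (wedge (genN n 0 0) (prodG n 1 (m + 1) (n - (m + 2)))) =
      (-1 : ℂ) ^ m • basisForm (vSet n m) := by
  set Q := idxSet n 1 (m + 1) (n - (m + 2)) with hQ
  have hdx : wedge (genN n 0 0) (basisForm Q) = basisForm (idxSet n 0 0 1 ∪ Q) := by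
    rw [wedge_genN_basisForm_of_lt (by omega) fun b hb => by
      simp only [hQ, mem_idxSet] at hb; omega]
    congr 1
    ext i
    simp only [hQ, mem_insert, mem_union, mem_idxSet, Fin.ext_iff]
    omega
  have hdisj : Disjoint (idxSet n 0 1 m) (idxSet n 0 0 1 ∪ Q) := by
    rw [disjoint_left]
    simp only [hQ, mem_union, mem_idxSet]
    omega
  have hinv : {ab ∈ idxSet n 0 1 m ×ˢ (idxSet n 0 0 1 ∪ Q) | ab.2 < ab.1} =
      idxSet n 0 1 m ×ˢ idxSet n 0 0 1 := by
    ext ⟨a, b⟩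
    simp only [hQ, mem_filter, mem_product, mem_union, mem_idxSet, Fin.lt_def]
    omega
  rw [prodG_eq_basisForm (by norm_num) (by omega), prodG_eq_basisForm (by norm_num) (by omega), hdx,
    wedge_basisForm hdisj, hinv, card_product, card_idxSet (by norm_num) (by omega),
    card_idxSet (by norm_num) (by omega), mul_one]
  congr 2
  ext i
  simp only [hQ, vSet, mem_union, mem_idxSet]
  omega

lemma betaF_add_two {m : ℕ} (hm : m + 2 ≤ n) :
    betaF n (m + 2) = fun p =>
      wedge (prodG n 0 1 m) (wedge (genN n 2 (m + 1)) (prodG n 1 (m + 1) (n - (m + 2)))) +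
      (conjCoordL ⟨m, by omega⟩ p - coordL ⟨m + 1, hm⟩ p) •
        ((-1 : ℂ) ^ m • basisForm (vSet n m)) := by
  funext p
  rw [← wedge_prodG_genN_zero_prodG hm, betaF, if_neg (by omega), omegaN, dif_pos (by omega)]
  simp only [omegaF, show m + 2 - 1 = m + 1 by omega, Nat.add_sub_cancel, Nat.add_one_ne_zero,
    if_false, wedge_add_left, wedge_add_right, wedge_smul_left, wedge_smul_right,
    conjCoordL_apply, coordL_apply]

lemma extD_betaF_one (hn : 2 ≤ n) (p : Pt n) : extD (betaF n 1) p = basisForm (wSet n 0) := by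
  rw [betaF_one (by omega), extD_const_add, extD_coordL_smul, Fin.val_mk, ← prodG_succ,
    show n - 2 + 1 = n - 1 by omega, prodG_eq_basisForm (by norm_num) (by omega),
    wedge_genN_basisForm_of_lt (by omega) fun b hb => by simp only [mem_idxSet] at hb; omega]
  congr 1
  ext i
  simp only [wSet, mem_insert, mem_union, mem_idxSet, Fin.ext_iff]
  omega

lemma extD_betaF_add_two {m : ℕ} (hm : m + 2 ≤ n) (p : Pt n) :
    extD (betaF n (m + 2)) p = basisForm (wSet n (m + 1)) - basisForm (wSet n m) := by
  have hdxbar : wedge (genN n 1 m) (basisForm (vSet n m)) =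
      (-1 : ℂ) ^ (m + 1) • basisForm (wSet n m) := by
    rw [wedge_genN_basisForm_vSet hm (by omega) (by omega) (by omega)]
    congr 2
    ext i
    simp only [wSet, vSet, mem_insert, mem_union, mem_idxSet, Fin.ext_iff]
    omega
  have hdx : wedge (genN n 0 (m + 1)) (basisForm (vSet n m)) =
      (-1 : ℂ) ^ (m + 1) • basisForm (wSet n (m + 1)) := by
    rw [wedge_genN_basisForm_vSet hm (by omega) (by omega) (by omega)]
    congr 2
    ext i
    simp only [wSet, vSet, mem_insert, mem_union, mem_idxSet, Fin.ext_iff]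
    omega
  rw [betaF_add_two hm, extD_const_add]
  simp only [sub_smul]
  simp only [sub_eq_add_neg (_ • _), ← smul_neg]
  rw [extD_add (by fun_prop) (by fun_prop), extD_conjCoordL_smul, extD_coordL_smul,
    smul_neg, wedge_neg_right, wedge_smul_right, wedge_smul_right, hdxbar, hdx, smul_smul,
    smul_smul, ← pow_add, Odd.neg_one_pow ⟨m, by ring⟩]
  module

lemma differentiable_betaF {k : ℕ} (hk : 1 ≤ k) (hkn : k ≤ n) :
    Differentiable ℝ (betaF n k) := by
  rcases k with _ | _ | m
  · omega
  · rw [betaF_one hkn]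
    fun_prop
  · rw [betaF_add_two hkn]
    fun_prop

lemma wSet_of_add_one_eq {k : ℕ} (hk : k + 1 = n) : wSet n k = idxSet n 0 0 n := by
  ext i
  simp only [wSet, mem_union, mem_idxSet]
  omega

end Beta

/-- the total form `β_1 + ⋯ + β_n` of degree `2n - 1` satisfies
`d(β_1 + ⋯ + β_n) = dx_1 ∧ ⋯ ∧ dx_n`, so the holomorphic `n`-form
`dx_1 ∧ ⋯ ∧ dx_n` is exact in the de Rham complex of complex-valued forms. -/
theorem d_beta_sum (n : ℕ) (hn : 2 ≤ n) :
    extD (fun p => ∑ k ∈ Finset.range n, betaF n (k + 1) p) = fun _ => prodG n 0 0 n := by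
  funext p
  rw [extD_sum _ _ fun k hk => differentiable_betaF le_add_self (mem_range.mp hk) p]
  obtain ⟨N, rfl⟩ : ∃ N, n = N + 1 := ⟨n - 1, by omega⟩
  rw [sum_range_succ', extD_betaF_one hn,
    sum_congr rfl fun k hk => extD_betaF_add_two (Nat.succ_lt_succ (mem_range.mp hk)) p,
    sum_range_sub (fun k => basisForm (wSet (N + 1) k)), sub_add_cancel,
    prodG_eq_basisForm (n := N + 1) (by norm_num) (by omega), wSet_of_add_one_eq rfl]
end
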